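/- Let (Q_i)_{i=1}^d be a numéraire-consistent family of probability measures. Then there exists a unique valuation measure Q̄ with respect to the basket that is equivalent to ∑_i Q_i and satisfies, for all r ∈ [0,T] and every F(T)-measurable value vector C for S(T) with C_i ∈ L¹(Q_i) for all i, the valuation formula E^{Q̄}[C̄ | F(r)] = ∑_{j ∈ A(r)} S̄_j(r)·E^{Q_j}[C_j/|A(T)| | F(r)] Q̄-almost surely. -/

import Mathlib

open MeasureTheory Filter Set Function
open scoped ENNReal

noncomputable section

/-- The product `x * y` of two elements of `[0,∞]` is defined unless `{x, y} = {0, ∞}`. -/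
def DefinedProd (x y : ℝ≥0∞) : Prop := ¬(x = 0 ∧ y = ∞) ∧ ¬(x = ∞ ∧ y = 0)

/-- An exchange matrix: a `d × d` matrix with entries in `[0,∞]` such that `s i i = 1` and
`s i j * s j k = s i k` whenever the product is defined. -/
structure IsExchangeMatrix {d : ℕ} (s : Fin d → Fin d → ℝ≥0∞) : Prop where
  diag : ∀ i, s i i = 1
  consistent : ∀ i j k, DefinedProd (s i j) (s j k) → s i j * s j k = s i k

/-- A value vector for an exchange matrix `s`: `s i j * v j = v i` whenever defined. -/
def IsValueVector {d : ℕ} (s : Fin d → Fin d → ℝ≥0∞) (v : Fin d → ℝ≥0∞) : Prop :=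
  ∀ i j, DefinedProd (s i j) (v j) → s i j * v j = v i

open Classical in
/-- The set of active indices of an exchange matrix: those whose row sum is finite. -/
def activeFinset {d : ℕ} (s : Fin d → Fin d → ℝ≥0∞) : Finset (Fin d) :=
  Finset.univ.filter fun i => ∑ j, s i j < ∞

/-- The market model of the paper: a right-continuous filtration `F` (with `F 0` trivial) on
`[0,T]`, and a right-continuous adapted process `S` of exchange matrices with deterministic
initial value `S0` all of whose rows are finite (no currency has devalued at time `0`). -/
structure MarketModel (d : ℕ) (Ω : Type*) [mΩ : MeasurableSpace Ω] (T : ℝ) where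
  F : Filtration ℝ mΩ
  S : ℝ → Ω → Fin d → Fin d → ℝ≥0∞
  S0 : Fin d → Fin d → ℝ≥0∞
  T_pos : 0 < T
  rc_F : ∀ t ∈ Set.Ico (0 : ℝ) T, (⨅ u ∈ Set.Ioi t, F u) ≤ F t
  trivial_F0 : ∀ A : Set Ω, MeasurableSet[F 0] A → A = ∅ ∨ A = Set.univ
  adapted_S : ∀ t ∈ Set.Icc (0 : ℝ) T, ∀ i j, Measurable[F t] fun ω => S t ω i j
  rc_S : ∀ ω i j, ∀ t ∈ Set.Ico (0 : ℝ) T,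
    Tendsto (fun u => S u ω i j) (nhdsWithin t (Set.Ioi t)) (nhds (S t ω i j))
  exchange_S : ∀ t ∈ Set.Icc (0 : ℝ) T, ∀ ω, IsExchangeMatrix fun i j => S t ω i j
  init_S : ∀ ω, S 0 ω = S0
  active_S0 : ∀ i, ∑ j, S0 i j < ∞

namespace MarketModel

variable {d : ℕ} {Ω : Type*} [mΩ : MeasurableSpace Ω] {T : ℝ}

/-- Basket-quoted price of the `i`-th currency. -/
def Sbar (M : MarketModel d Ω T) (i : Fin d) (t : ℝ) (ω : Ω) : ℝ≥0∞ :=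
  (∑ j, M.S t ω i j)⁻¹

/-- The (random) set of active currencies at time `t`. -/
def active (M : MarketModel d Ω T) (t : ℝ) (ω : Ω) : Finset (Fin d) :=
  activeFinset fun i j => M.S t ω i j

/-- The payoff of a claim `C` in terms of the basket:
`C̄ = (1/|A(T)|) ∑_{j ∈ A(T)} S̄_j(T) C_j`. -/
def Cbar (M : MarketModel d Ω T) (C : Ω → Fin d → ℝ≥0∞) (ω : Ω) : ℝ≥0∞ :=
  ((M.active T ω).card : ℝ≥0∞)⁻¹ * ∑ j ∈ M.active T ω, M.Sbar j T ω * C ω j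

/-- A contingent claim: an `F(T)`-measurable value vector for `S(T)`. -/
def IsClaim (M : MarketModel d Ω T) (C : Ω → Fin d → ℝ≥0∞) : Prop :=
  (∀ i, Measurable fun ω => C ω i) ∧
  ∀ ω, IsValueVector (fun i j => M.S T ω i j) (C ω)

end MarketModel

/-- A real-valued martingale on the time interval `[0, T]`. -/
def MartingaleOn {Ω : Type*} {mΩ : MeasurableSpace Ω} (F : Filtration ℝ mΩ)
    (Q : Measure Ω) (X : ℝ → Ω → ℝ) (T : ℝ) : Prop :=
  (∀ t ∈ Set.Icc (0 : ℝ) T, StronglyMeasurable[F t] (X t) ∧ Integrable (X t) Q) ∧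
  ∀ r ∈ Set.Icc (0 : ℝ) T, ∀ t ∈ Set.Icc (0 : ℝ) T, r ≤ t → Q[X t|F r] =ᵐ[Q] X r

/-- A real-valued supermartingale on the time interval `[0, T]`. -/
def SupermartingaleOn {Ω : Type*} {mΩ : MeasurableSpace Ω} (F : Filtration ℝ mΩ)
    (Q : Measure Ω) (X : ℝ → Ω → ℝ) (T : ℝ) : Prop :=
  (∀ t ∈ Set.Icc (0 : ℝ) T, StronglyMeasurable[F t] (X t) ∧ Integrable (X t) Q) ∧
  ∀ r ∈ Set.Icc (0 : ℝ) T, ∀ t ∈ Set.Icc (0 : ℝ) T, r ≤ t → Q[X t|F r] ≤ᵐ[Q] X r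

/-- A local martingale on `[0, T]`: there is a nondecreasing sequence of stopping times
with `Q(lim_n τ_n > T) = 1` such that each stopped process is a martingale on `[0, T]`. -/
def LocalMartingaleOn {Ω : Type*} {mΩ : MeasurableSpace Ω} (F : Filtration ℝ mΩ)
    (Q : Measure Ω) (X : ℝ → Ω → ℝ) (T : ℝ) : Prop :=
  ∃ τ : ℕ → Ω → ℝ,
    (∀ n, IsStoppingTime F (fun ω => (τ n ω : WithTop ℝ))) ∧
    (∀ n ω, τ n ω ≤ τ (n + 1) ω) ∧
    (∀ᵐ ω ∂Q, ∃ n, T < τ n ω) ∧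
    ∀ n, MartingaleOn F Q (fun t ω => X (min t (τ n ω)) ω) T

/-- A numéraire-consistent family of probability measures:
`E^{Q_i}[S_{i,j}(t) 1_A] = S_{i,j}(0) Q_j(A ∩ {S_{j,i}(t) > 0})`. -/
def NumeraireConsistent {d : ℕ} {Ω : Type*} [mΩ : MeasurableSpace Ω] {T : ℝ}
    (M : MarketModel d Ω T) (Q : Fin d → Measure Ω) : Prop :=
  (∀ i, IsProbabilityMeasure (Q i)) ∧
  ∀ i j : Fin d, ∀ t ∈ Set.Icc (0 : ℝ) T, ∀ A : Set Ω, MeasurableSet[M.F t] A →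
    ∫⁻ ω in A, M.S t ω i j ∂(Q i) = M.S0 i j * Q j (A ∩ {ω | 0 < M.S t ω j i})

/-- A valuation measure with respect to the basket: the basket-quoted prices form a
`Q̄`-martingale on `[0, T]`. -/
def IsValuationMeasure {d : ℕ} {Ω : Type*} [mΩ : MeasurableSpace Ω] {T : ℝ}
    (M : MarketModel d Ω T) (Qb : Measure Ω) : Prop :=
  IsProbabilityMeasure Qb ∧
  ∀ i, MartingaleOn M.F Qb (fun t ω => (M.Sbar i t ω).toReal) T

/-- The aggregation valuation formula
`E^{Q̄}[C̄ | F(r)] = ∑_{j ∈ A(r)} S̄_j(r) E^{Q_j}[C_j / |A(T)| | F(r)]`. -/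
def AggregationFormula {d : ℕ} {Ω : Type*} [mΩ : MeasurableSpace Ω] {T : ℝ}
    (M : MarketModel d Ω T) (Qb : Measure Ω) (Q : Fin d → Measure Ω)
    (C : Ω → Fin d → ℝ≥0∞) (r : ℝ) : Prop :=
  Qb[fun ω => (M.Cbar C ω).toReal|M.F r] =ᵐ[Qb] fun ω =>
    ∑ j, Set.indicator {ω' | ∑ k, M.S r ω' j k < ∞}
      (fun ω' => (M.Sbar j r ω').toReal *
        ((Q j)[fun ω'' => (C ω'' j / ((M.active T ω'').card : ℝ≥0∞)).toReal|M.F r]) ω') ω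

/-- An `[0,∞]`-valued process jumps to zero on `[0, T]`: it is zero at some time `t ∈ [0, T]`
while its left limit at `t` is strictly positive. -/
def JumpsToZeroOn (X : ℝ → ℝ≥0∞) (T : ℝ) : Prop :=
  ∃ t ∈ Set.Icc (0 : ℝ) T, X t = 0 ∧ 0 < Function.leftLim X t

/-- A `[0,∞]`-valued stopping time. -/
def IsStoppingTimeE {Ω : Type*} {mΩ : MeasurableSpace Ω} (F : Filtration ℝ mΩ)
    (τ : Ω → ℝ≥0∞) : Prop :=
  ∀ t : ℝ, 0 ≤ t → MeasurableSet[F t] {ω | τ ω ≤ ENNReal.ofReal t}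

/-- Membership in the σ-algebra `F(τ)` for a `[0,∞]`-valued stopping time `τ`. -/
def MeasurableSetAtE {Ω : Type*} {mΩ : MeasurableSpace Ω} (F : Filtration ℝ mΩ)
    (τ : Ω → ℝ≥0∞) (A : Set Ω) : Prop :=
  MeasurableSet A ∧ ∀ t : ℝ, 0 ≤ t → MeasurableSet[F t] (A ∩ {ω | τ ω ≤ ENNReal.ofReal t})

/-- A predictable time: a stopping time announced by a nondecreasing sequence of stopping
times converging to it and strictly smaller than it on its finiteness set. -/
def IsPredictableTimeE {Ω : Type*} {mΩ : MeasurableSpace Ω} (F : Filtration ℝ mΩ)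
    (σ : Ω → ℝ≥0∞) : Prop :=
  IsStoppingTimeE F σ ∧
  ∃ a : ℕ → Ω → ℝ≥0∞,
    (∀ n, IsStoppingTimeE F (a n)) ∧
    (∀ n ω, a n ω ≤ a (n + 1) ω) ∧
    (∀ ω, (⨆ n, a n ω) = σ ω) ∧
    ∀ n ω, 0 < σ ω → σ ω < ∞ → a n ω < σ ω

/-- No Obvious Devaluations: for every currency `i` and stopping time `τ`,
`P(i ∈ A(T) | F(τ)) > 0` almost surely on `{τ < ∞} ∩ {i ∈ A(τ)}`, formulated via
`F(τ)`-measurable subsets of that event. -/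
def NOD {d : ℕ} {Ω : Type*} [mΩ : MeasurableSpace Ω] {T : ℝ}
    (M : MarketModel d Ω T) (P : Measure Ω) : Prop :=
  ∀ i : Fin d, ∀ τ : Ω → ℝ≥0∞, IsStoppingTimeE M.F τ →
    ∀ A : Set Ω, MeasurableSetAtE M.F τ A →
      (∀ ω ∈ A, τ ω < ∞ ∧ ∑ j, M.S (τ ω).toReal ω i j < ∞) →
      0 < P A → 0 < P (A ∩ {ω | ∑ j, M.S T ω i j < ∞})

/-!
Write `S̄_j(0) = 1 / ∑_k S0_{jk}`. Numéraire consistency says that on `F(t)` the measures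
`S̄_i(0) S_{ij}(t) dQ_i` and `S̄_j(0) 1_{i ∈ A(t)} dQ_j` coincide. Gluing the `Q_j` accordingly,
`Q̄ = ∑_j S̄_j(0) (S̄_j(T) |A(T)|)⁻¹ Q_j` agrees with `∑_j S̄_j(0) Q_j` on `F(T)`, and
`E^{Q̄}[S̄_j(r) φ] = S̄_j(0) E^{Q_j}[φ]` for `F(r)`-measurable `φ`. With `φ = 1_B` this is the
martingale property of `S̄_j`; since `C̄ = S̄_j(T) C_j` wherever `j` is active, it also yields the
valuation formula. For uniqueness, the claim paying one unit of the basket on `B` has `C̄ = 1_B`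
almost surely, so the valuation formula at `r = 0`, where `F(0)` is trivial, determines `Q̄(B)`.
-/

namespace IsExchangeMatrix

variable {d : ℕ} {s : Fin d → Fin d → ℝ≥0∞}

theorem one_le_sum_row (hs : IsExchangeMatrix s) (i : Fin d) : 1 ≤ ∑ k, s i k :=
  hs.diag i ▸ Finset.single_le_sum_of_canonicallyOrdered (Finset.mem_univ i)

theorem sum_row_ne_zero (hs : IsExchangeMatrix s) (i : Fin d) : ∑ k, s i k ≠ 0 :=
  (one_pos.trans_le (hs.one_le_sum_row i)).ne'

theorem ne_zero_of_sum_row_lt_top (hs : IsExchangeMatrix s) {j : Fin d}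
    (hj : ∑ k, s j k < ∞) (i : Fin d) : s i j ≠ 0 := by
  intro hij
  have hji : s j i ≠ ∞ := (ENNReal.sum_lt_top.1 hj i (Finset.mem_univ i)).ne
  have := hs.consistent j i j ⟨fun h => by simp [hij] at h, fun h => hji h.1⟩
  simp [hij, hs.diag j] at this

theorem sum_row_eq_mul (hs : IsExchangeMatrix s) {i j : Fin d} (h0 : s i j ≠ 0)
    (htop : s i j ≠ ∞) : ∑ k, s i k = s i j * ∑ k, s j k := by
  rw [Finset.mul_sum]
  exact Finset.sum_congr rfl fun k _ =>
    (hs.consistent i j k ⟨fun h => h0 h.1, fun h => htop h.1⟩).symm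

/-- In basket-quoted prices: `S̄_j = s_{ij} S̄_i` whenever `i` is active. -/
theorem mul_inv_sum_row (hs : IsExchangeMatrix s) {i : Fin d} (hi : ∑ k, s i k < ∞)
    (j : Fin d) : s i j * (∑ k, s i k)⁻¹ = (∑ k, s j k)⁻¹ := by
  have hij_top : s i j ≠ ∞ := (ENNReal.sum_lt_top.1 hi j (Finset.mem_univ j)).ne
  by_cases hij : s i j = 0
  · have hj : ∑ k, s j k = ∞ := not_lt_top_iff.1 fun hj => hs.ne_zero_of_sum_row_lt_top hj i hij
    rw [hij, hj, zero_mul, ENNReal.inv_top]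
  · rw [hs.sum_row_eq_mul hij hij_top, ENNReal.mul_inv (Or.inl hij) (Or.inl hij_top),
      ← mul_assoc, ENNReal.mul_inv_cancel hij hij_top, one_mul]

theorem sum_inv_sum_row (hs : IsExchangeMatrix s) {i : Fin d} (hi : ∑ k, s i k < ∞) :
    ∑ j, (∑ k, s j k)⁻¹ = 1 := by
  rw [Finset.sum_congr rfl fun j _ => (hs.mul_inv_sum_row hi j).symm, ← Finset.sum_mul]
  exact ENNReal.mul_inv_cancel (hs.sum_row_ne_zero i) hi.ne

theorem pos_iff_sum_row_lt_top (hs : IsExchangeMatrix s) {i : Fin d} (hi : ∑ k, s i k < ∞)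
    (j : Fin d) : 0 < s i j ↔ ∑ k, s j k < ∞ := by
  rw [lt_top_iff_ne_top, ← ENNReal.inv_pos, ← hs.mul_inv_sum_row hi j, ENNReal.mul_pos_iff]
  exact ⟨fun h => ⟨h, ENNReal.inv_pos.2 hi.ne⟩, And.left⟩

theorem isValueVector_sum_row (hs : IsExchangeMatrix s) :
    IsValueVector s fun j => ∑ k, s j k := by
  intro i j hdef
  by_cases htop : s i j = ∞
  · rw [htop, ENNReal.top_mul (hs.sum_row_ne_zero j), eq_comm, ENNReal.sum_eq_top]
    exact ⟨j, Finset.mem_univ j, htop⟩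
  · have h0 : s i j ≠ 0 := fun h0 =>
      hs.ne_zero_of_sum_row_lt_top (lt_top_iff_ne_top.2 fun h => hdef.1 ⟨h0, h⟩) i h0
    exact (hs.sum_row_eq_mul h0 htop).symm

end IsExchangeMatrix

theorem IsValueVector.const_mul {d : ℕ} {s : Fin d → Fin d → ℝ≥0∞} {v : Fin d → ℝ≥0∞}
    (hv : IsValueVector s v) {c : ℝ≥0∞} (hc : c ≠ ∞) : IsValueVector s fun j => c * v j := by
  intro i j hdef
  rcases eq_or_ne c 0 with rfl | hc0
  · simp only [zero_mul, mul_zero]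
  · rw [mul_left_comm,
      hv i j ⟨fun h => hdef.1 ⟨h.1, show c * v j = ∞ by rw [h.2, ENNReal.mul_top hc0]⟩,
        fun h => hdef.2 ⟨h.1, show c * v j = 0 by rw [h.2, mul_zero]⟩⟩]

theorem IsValueVector.inv_sum_row_mul_eq {d : ℕ} {s : Fin d → Fin d → ℝ≥0∞}
    {v : Fin d → ℝ≥0∞} (hv : IsValueVector s v) (hs : IsExchangeMatrix s) {i j : Fin d}
    (hi : ∑ k, s i k < ∞) (hj : ∑ k, s j k < ∞) :
    (∑ k, s i k)⁻¹ * v i = (∑ k, s j k)⁻¹ * v j := by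
  have h0 := hs.ne_zero_of_sum_row_lt_top hj i
  have htop : s i j ≠ ∞ := (ENNReal.sum_lt_top.1 hi j (Finset.mem_univ j)).ne
  rw [← hv i j ⟨fun h => h0 h.1, fun h => htop h.1⟩, ← mul_assoc, mul_comm _ (s i j),
    hs.mul_inv_sum_row hi j]

namespace MarketModel

variable {d : ℕ} {Ω : Type*} [MeasurableSpace Ω] {T : ℝ}

theorem zero_mem_Icc (M : MarketModel d Ω T) : (0 : ℝ) ∈ Set.Icc 0 T :=
  left_mem_Icc.2 M.T_pos.le

theorem T_mem_Icc (M : MarketModel d Ω T) : T ∈ Set.Icc 0 T := right_mem_Icc.2 M.T_pos.le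

variable (M : MarketModel d Ω T)

def Sbar0 (j : Fin d) : ℝ≥0∞ := (∑ k, M.S0 j k)⁻¹

theorem sum_S_zero_lt_top (i : Fin d) (ω : Ω) : ∑ k, M.S 0 ω i k < ∞ := by
  simpa [M.init_S ω] using M.active_S0 i

variable {M} {t : ℝ} {ω : Ω}

theorem mem_active {j : Fin d} : j ∈ M.active t ω ↔ ∑ k, M.S t ω j k < ∞ := by
  simp [active, activeFinset]

theorem Sbar_zero (j : Fin d) (ω : Ω) : M.Sbar j 0 ω = M.Sbar0 j := by
  rw [Sbar, M.init_S ω, Sbar0]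

theorem Sbar_eq_zero {j : Fin d} (hj : ¬∑ k, M.S t ω j k < ∞) : M.Sbar j t ω = 0 := by
  rw [Sbar, not_lt_top_iff.1 hj, ENNReal.inv_top]

theorem Sbar_ne_zero {j : Fin d} (hj : ∑ k, M.S t ω j k < ∞) : M.Sbar j t ω ≠ 0 :=
  ENNReal.inv_ne_zero.2 hj.ne

theorem Sbar_le_one (ht : t ∈ Set.Icc 0 T) (j : Fin d) (ω : Ω) : M.Sbar j t ω ≤ 1 :=
  ENNReal.inv_le_one.2 ((M.exchange_S t ht ω).one_le_sum_row j)

theorem Sbar_ne_top (ht : t ∈ Set.Icc 0 T) (j : Fin d) (ω : Ω) : M.Sbar j t ω ≠ ∞ :=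
  ((Sbar_le_one ht j ω).trans_lt ENNReal.one_lt_top).ne

theorem S_mul_Sbar (ht : t ∈ Set.Icc 0 T) {i : Fin d} (hi : ∑ k, M.S t ω i k < ∞) (j : Fin d) :
    M.S t ω i j * M.Sbar i t ω = M.Sbar j t ω :=
  (M.exchange_S t ht ω).mul_inv_sum_row hi j

theorem sum_Sbar (ht : t ∈ Set.Icc 0 T) {i : Fin d} (hi : ∑ k, M.S t ω i k < ∞) :
    ∑ j, M.Sbar j t ω = 1 :=
  (M.exchange_S t ht ω).sum_inv_sum_row hi

theorem indicator_active_eq_self {α : Type*} [Zero α] {j : Fin d} {f : Ω → α}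
    (hf : ∀ ω, M.Sbar j t ω = 0 → f ω = 0) :
    {ω | ∑ k, M.S t ω j k < ∞}.indicator f = f :=
  Set.indicator_eq_self.2 fun ω hω => by_contra fun hj => hω (hf ω (Sbar_eq_zero hj))

theorem sum_indicator_active (G : Ω → ℝ≥0∞) (ω : Ω) :
    ∑ j, {ω | ∑ k, M.S t ω j k < ∞}.indicator G ω = (M.active t ω).card * G ω := by
  classical
  simp only [Set.indicator_apply, Set.mem_ofPred_eq, ← Finset.sum_filter, Finset.sum_const,
    nsmul_eq_mul]
  rfl

theorem card_active_ne_zero {j : Fin d} (hj : ∑ k, M.S t ω j k < ∞) :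
    ((M.active t ω).card : ℝ≥0∞) ≠ 0 :=
  Nat.cast_ne_zero.2 (Finset.card_ne_zero_of_mem (mem_active.2 hj))

theorem Cbar_eq_sum (C : Ω → Fin d → ℝ≥0∞) (ω : Ω) :
    M.Cbar C ω = ((M.active T ω).card : ℝ≥0∞)⁻¹ * ∑ j, M.Sbar j T ω * C ω j := by
  refine congrArg _ (Finset.sum_subset (Finset.subset_univ _) fun j _ hj => ?_)
  rw [Sbar_eq_zero (mt mem_active.2 hj), zero_mul]

theorem Cbar_eq_Sbar_mul {C : Ω → Fin d → ℝ≥0∞}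
    (hC : IsValueVector (fun i j => M.S T ω i j) (C ω)) {j : Fin d}
    (hj : ∑ k, M.S T ω j k < ∞) : M.Cbar C ω = M.Sbar j T ω * C ω j := by
  have hterm : ∀ l ∈ M.active T ω, M.Sbar l T ω * C ω l = M.Sbar j T ω * C ω j :=
    fun l hl => hC.inv_sum_row_mul_eq (M.exchange_S T M.T_mem_Icc ω) (mem_active.1 hl) hj
  rw [Cbar, Finset.sum_congr rfl hterm, Finset.sum_const, nsmul_eq_mul, ← mul_assoc,
    ENNReal.inv_mul_cancel (card_active_ne_zero hj) (ENNReal.natCast_ne_top _), one_mul]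

theorem S0_mul_Sbar0 [Nonempty Ω] (i j : Fin d) : M.S0 i j * M.Sbar0 i = M.Sbar0 j := by
  obtain ⟨ω⟩ := ‹Nonempty Ω›
  have := S_mul_Sbar M.zero_mem_Icc (M.sum_S_zero_lt_top i ω) j
  rwa [Sbar_zero, Sbar_zero, M.init_S ω] at this

theorem sum_Sbar0 [Nonempty Ω] (hd : 0 < d) : ∑ j, M.Sbar0 j = 1 := by
  obtain ⟨ω⟩ := ‹Nonempty Ω›
  simpa only [Sbar_zero] using sum_Sbar M.zero_mem_Icc (M.sum_S_zero_lt_top ⟨0, hd⟩ ω)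

theorem Sbar0_ne_zero (j : Fin d) : M.Sbar0 j ≠ 0 :=
  ENNReal.inv_ne_zero.2 (M.active_S0 j).ne

theorem Sbar0_ne_top [Nonempty Ω] (j : Fin d) : M.Sbar0 j ≠ ∞ := by
  obtain ⟨ω⟩ := ‹Nonempty Ω›
  simpa only [Sbar_zero] using Sbar_ne_top M.zero_mem_Icc j ω

theorem measurable_sum_S (ht : t ∈ Set.Icc 0 T) (i : Fin d) :
    Measurable[M.F t] fun ω => ∑ k, M.S t ω i k :=
  Finset.measurable_sum _ fun k _ => M.adapted_S t ht i k

theorem measurableSet_active (ht : t ∈ Set.Icc 0 T) (i : Fin d) :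
    MeasurableSet[M.F t] {ω | ∑ k, M.S t ω i k < ∞} :=
  measurableSet_lt (measurable_sum_S ht i) measurable_const

theorem measurable_Sbar (ht : t ∈ Set.Icc 0 T) (i : Fin d) : Measurable[M.F t] (M.Sbar i t) :=
  (measurable_sum_S ht i).inv

theorem measurable_card_active (ht : t ∈ Set.Icc 0 T) :
    Measurable[M.F t] fun ω => ((M.active t ω).card : ℝ≥0∞) := by
  have h : (fun ω => ((M.active t ω).card : ℝ≥0∞)) =
      fun ω => ∑ i, {ω | ∑ k, M.S t ω i k < ∞}.indicator 1 ω := by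
    ext ω; rw [sum_indicator_active, Pi.one_apply, mul_one]
  rw [h]
  exact Finset.measurable_sum _ fun i _ => measurable_const.indicator (measurableSet_active ht i)

theorem measurable_Cbar {C : Ω → Fin d → ℝ≥0∞} (hC : ∀ i, Measurable fun ω => C ω i) :
    Measurable (M.Cbar C) := by
  have hT := M.T_mem_Icc
  simp_rw [funext (Cbar_eq_sum C)]
  exact ((measurable_card_active hT).mono (M.F.le T) le_rfl).inv.mul <|
    Finset.measurable_sum _ fun j _ => ((measurable_Sbar hT j).mono (M.F.le T) le_rfl).mul (hC j)

end MarketModel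

namespace NumeraireConsistent

open MarketModel

variable {d : ℕ} {Ω : Type*} [MeasurableSpace Ω] {T : ℝ} {M : MarketModel d Ω T}
  {Q : Fin d → Measure Ω} {t : ℝ}

theorem lintegral_mul_S (hQ : NumeraireConsistent M Q)
    (ht : t ∈ Set.Icc 0 T) {G : Ω → ℝ≥0∞} (hG : Measurable[M.F t] G) (i j : Fin d) :
    ∫⁻ ω, G ω * M.S t ω i j ∂Q i = M.S0 i j * ∫⁻ ω in {ω | 0 < M.S t ω j i}, G ω ∂Q j := by
  have hm := M.F.le t
  have htrim : ((Q i).withDensity fun ω => M.S t ω i j).trim hm =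
      (M.S0 i j • (Q j).restrict {ω | 0 < M.S t ω j i}).trim hm := by
    refine @Measure.ext _ (M.F t) _ _ fun A hA => ?_
    rw [trim_measurableSet_eq hm hA, trim_measurableSet_eq hm hA, withDensity_apply _ (hm A hA),
      Measure.smul_apply, smul_eq_mul, Measure.restrict_apply (hm A hA)]
    exact hQ.2 i j t ht A hA
  calc ∫⁻ ω, G ω * M.S t ω i j ∂Q i
      = ∫⁻ ω, G ω ∂(Q i).withDensity fun ω => M.S t ω i j := by
        rw [lintegral_withDensity_eq_lintegral_mul _ ((M.adapted_S t ht i j).mono hm le_rfl)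
          (hG.mono hm le_rfl)]
        simp only [Pi.mul_apply, mul_comm]
    _ = M.S0 i j * ∫⁻ ω in {ω | 0 < M.S t ω j i}, G ω ∂Q j := by
        rw [← lintegral_trim hm hG, htrim, lintegral_trim hm hG, lintegral_smul_measure,
          smul_eq_mul]

theorem lintegral_sum_S_lt_top (hQ : NumeraireConsistent M Q)
    (ht : t ∈ Set.Icc 0 T) (i : Fin d) : ∫⁻ ω, ∑ k, M.S t ω i k ∂Q i < ∞ := by
  rw [lintegral_finsetSum _ fun k _ => (M.adapted_S t ht i k).mono (M.F.le t) le_rfl]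
  refine ENNReal.sum_lt_top.2 fun k _ => ?_
  have h := hQ.2 i k t ht Set.univ MeasurableSet.univ
  rw [Measure.restrict_univ] at h
  rw [h]
  have := hQ.1 k
  exact ENNReal.mul_lt_top (ENNReal.sum_lt_top.1 (M.active_S0 i) k (Finset.mem_univ k))
    (prob_le_one.trans_lt ENNReal.one_lt_top)

theorem ae_active (hQ : NumeraireConsistent M Q) (ht : t ∈ Set.Icc 0 T)
    (i : Fin d) : ∀ᵐ ω ∂Q i, ∑ k, M.S t ω i k < ∞ :=
  ae_lt_top' ((measurable_sum_S ht i).mono (M.F.le t) le_rfl).aemeasurable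
    (hQ.lintegral_sum_S_lt_top ht i).ne

theorem Sbar0_mul_lintegral_mul_S (hQ : NumeraireConsistent M Q)
    (ht : t ∈ Set.Icc 0 T) {G : Ω → ℝ≥0∞} (hG : Measurable[M.F t] G) (i j : Fin d) :
    M.Sbar0 i * ∫⁻ ω, G ω * M.S t ω i j ∂Q i =
      M.Sbar0 j * ∫⁻ ω, {ω | ∑ k, M.S t ω i k < ∞}.indicator G ω ∂Q j := by
  have := hQ.1 i
  have := nonempty_of_isProbabilityMeasure (Q i)
  have hset : {ω | 0 < M.S t ω j i} =ᵐ[Q j] {ω | ∑ k, M.S t ω i k < ∞} := by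
    filter_upwards [hQ.ae_active ht j] with ω hj
    exact propext ((M.exchange_S t ht ω).pos_iff_sum_row_lt_top hj i)
  rw [hQ.lintegral_mul_S ht hG, ← mul_assoc, mul_comm (M.Sbar0 i), S0_mul_Sbar0,
    ← lintegral_indicator ((M.F.le t) _ (measurableSet_lt measurable_const
      (M.adapted_S t ht j i))), lintegral_congr_ae (indicator_ae_eq_of_ae_eq_set hset)]

theorem lintegral_div_card_le (hQ : NumeraireConsistent M Q) {C : Ω → Fin d → ℝ≥0∞}
    {s : Set Ω} (j : Fin d) :
    ∫⁻ ω in s, C ω j / (M.active T ω).card ∂Q j ≤ ∫⁻ ω, C ω j ∂Q j := by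
  refine (lintegral_mono_ae ?_).trans (setLIntegral_le_lintegral s _)
  filter_upwards [ae_restrict_of_ae (hQ.ae_active M.T_mem_Icc j)] with ω hj
  refine ENNReal.div_le_of_le_mul (le_mul_of_one_le_right' ?_)
  exact Nat.one_le_cast.2 (Nat.one_le_iff_ne_zero.2 (Nat.cast_ne_zero.1 (card_active_ne_zero hj)))

theorem ae_exists_active (hQ : NumeraireConsistent M Q) :
    ∀ᵐ ω ∂∑ i, Q i, ∃ j, ∑ k, M.S T ω j k < ∞ := by
  rw [← Measure.sum_fintype, Measure.ae_sum_iff]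
  exact fun i => (hQ.ae_active M.T_mem_Icc i).mono fun ω h => ⟨i, h⟩

end NumeraireConsistent

namespace MarketModel

variable {d : ℕ} {Ω : Type*} [MeasurableSpace Ω] {T : ℝ} (M : MarketModel d Ω T)
  (Q : Fin d → Measure Ω)

def basketDensity (j : Fin d) (ω : Ω) : ℝ≥0∞ := (M.Sbar j T ω)⁻¹ / (M.active T ω).card

/-- The candidate valuation measure `Q̄`. The densities are chosen so that
`E^{Q̄}[C̄] = ∑_j S̄_j(0) E^{Q_j}[C_j / |A(T)|]`; on `F(T)` it reduces to `∑_j S̄_j(0) Q_j`. -/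
def basketMeasure : Measure Ω := ∑ j, M.Sbar0 j • (Q j).withDensity (M.basketDensity j)

/-- The claim paying one unit of the basket on the event `B`. -/
def basketClaim (B : Set Ω) (ω : Ω) (j : Fin d) : ℝ≥0∞ := B.indicator 1 ω * ∑ k, M.S T ω j k

variable {M Q} {r : ℝ} {C : Ω → Fin d → ℝ≥0∞} {B : Set Ω}

theorem measurable_basketDensity (j : Fin d) : Measurable (M.basketDensity j) :=
  ((measurable_Sbar M.T_mem_Icc j).mono (M.F.le T) le_rfl).inv.div
    ((measurable_card_active M.T_mem_Icc).mono (M.F.le T) le_rfl)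

theorem lintegral_basketMeasure {f : Ω → ℝ≥0∞} (hf : Measurable f) :
    ∫⁻ ω, f ω ∂M.basketMeasure Q =
      ∑ j, M.Sbar0 j * ∫⁻ ω, M.basketDensity j ω * f ω ∂Q j := by
  rw [basketMeasure, lintegral_finsetSum_measure]
  refine Finset.sum_congr rfl fun j _ => ?_
  rw [lintegral_smul_measure, smul_eq_mul,
    lintegral_withDensity_eq_lintegral_mul _ (measurable_basketDensity j) hf]
  rfl

theorem lintegral_basketMeasure_of_measurable (hQ : NumeraireConsistent M Q) {φ : Ω → ℝ≥0∞}
    (hφ : Measurable[M.F T] φ) :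
    ∫⁻ ω, φ ω ∂M.basketMeasure Q = ∑ k, M.Sbar0 k * ∫⁻ ω, φ ω ∂Q k := by
  have hT := M.T_mem_Icc
  have hG : Measurable[M.F T] fun ω => φ ω / (M.active T ω).card :=
    hφ.div (measurable_card_active hT)
  have hGS : ∀ j k, Measurable fun ω => φ ω / (M.active T ω).card * M.S T ω j k :=
    fun j k => (hG.mul (M.adapted_S T hT j k)).mono (M.F.le T) le_rfl
  calc ∫⁻ ω, φ ω ∂M.basketMeasure Q
      = ∑ j, ∑ k, M.Sbar0 j * ∫⁻ ω, φ ω / (M.active T ω).card * M.S T ω j k ∂Q j := by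
        rw [lintegral_basketMeasure (hφ.mono (M.F.le T) le_rfl)]
        refine Finset.sum_congr rfl fun j _ => ?_
        rw [← Finset.mul_sum, ← lintegral_finsetSum _ fun k _ => hGS j k]
        congr 1
        refine lintegral_congr fun ω => ?_
        rw [basketDensity, Sbar, inv_inv, div_eq_mul_inv, div_eq_mul_inv, Finset.sum_mul,
          Finset.sum_mul]
        exact Finset.sum_congr rfl fun k _ => by ring
    _ = ∑ j, ∑ k, M.Sbar0 k *
          ∫⁻ ω, {ω | ∑ l, M.S T ω j l < ∞}.indicator (fun ω => φ ω / (M.active T ω).card) ω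
            ∂Q k := by
        simp_rw [hQ.Sbar0_mul_lintegral_mul_S hT hG]
    _ = ∑ k, M.Sbar0 k * ∫⁻ ω, φ ω ∂Q k := by
        rw [Finset.sum_comm]
        refine Finset.sum_congr rfl fun k _ => ?_
        rw [← Finset.mul_sum, ← lintegral_finsetSum _ fun j _ =>
          (hG.mono (M.F.le T) le_rfl).indicator ((M.F.le T) _ (measurableSet_active hT j))]
        congr 1
        refine lintegral_congr_ae ?_
        filter_upwards [hQ.ae_active hT k] with ω hk
        rw [sum_indicator_active, ENNReal.mul_div_cancel (card_active_ne_zero hk)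
          (ENNReal.natCast_ne_top _)]

theorem lintegral_Sbar_mul_basketMeasure (hQ : NumeraireConsistent M Q)
    (hr : r ∈ Set.Icc 0 T) {φ : Ω → ℝ≥0∞} (hφ : Measurable[M.F r] φ) (j : Fin d) :
    ∫⁻ ω, M.Sbar j r ω * φ ω ∂M.basketMeasure Q = M.Sbar0 j * ∫⁻ ω, φ ω ∂Q j := by
  have hG : ∀ k, Measurable[M.F r] fun ω => M.Sbar k r ω * φ ω :=
    fun k => (measurable_Sbar hr k).mul hφ
  calc ∫⁻ ω, M.Sbar j r ω * φ ω ∂M.basketMeasure Q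
      = ∑ k, M.Sbar0 k * ∫⁻ ω, M.Sbar k r ω * φ ω * M.S r ω k j ∂Q k := by
        rw [lintegral_basketMeasure_of_measurable hQ ((hG j).mono (M.F.mono hr.2) le_rfl)]
        refine Finset.sum_congr rfl fun k _ => congrArg _ (lintegral_congr_ae ?_)
        filter_upwards [hQ.ae_active hr k] with ω hk
        rw [← S_mul_Sbar hr hk j]
        ring
    _ = ∑ k, M.Sbar0 j * ∫⁻ ω, M.Sbar k r ω * φ ω ∂Q j := by
        refine Finset.sum_congr rfl fun k _ => ?_
        rw [hQ.Sbar0_mul_lintegral_mul_S hr (hG k),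
          indicator_active_eq_self fun ω h => by rw [h, zero_mul]]
    _ = M.Sbar0 j * ∫⁻ ω, φ ω ∂Q j := by
        rw [← Finset.mul_sum, ← lintegral_finsetSum _ fun k _ =>
          (hG k).mono (M.F.le r) le_rfl]
        congr 1
        refine lintegral_congr_ae ?_
        filter_upwards [hQ.ae_active hr j] with ω hj
        rw [← Finset.sum_mul, sum_Sbar hr hj, one_mul]

theorem trim_withDensity_Sbar_basketMeasure (hQ : NumeraireConsistent M Q)
    (hr : r ∈ Set.Icc 0 T) (j : Fin d) :
    ((M.basketMeasure Q).withDensity (M.Sbar j r)).trim (M.F.le r) =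
      (M.Sbar0 j • Q j).trim (M.F.le r) := by
  refine @Measure.ext _ (M.F r) _ _ fun A hA => ?_
  have hA' := M.F.le r A hA
  rw [trim_measurableSet_eq _ hA, trim_measurableSet_eq _ hA, withDensity_apply _ hA',
    Measure.smul_apply, smul_eq_mul, ← lintegral_indicator_one hA', ← lintegral_indicator hA']
  refine (lintegral_congr fun ω => ?_).trans
    (lintegral_Sbar_mul_basketMeasure hQ hr (measurable_const.indicator hA) j)
  by_cases hω : ω ∈ A <;> simp [hω]

theorem integral_Sbar_mul_basketMeasure (hQ : NumeraireConsistent M Q) (hr : r ∈ Set.Icc 0 T)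
    (j : Fin d) {φ : Ω → ℝ} (hφ : StronglyMeasurable[M.F r] φ) :
    ∫ ω, (M.Sbar j r ω).toReal * φ ω ∂M.basketMeasure Q = (M.Sbar0 j).toReal * ∫ ω, φ ω ∂Q j := by
  have hm := M.F.le r
  calc ∫ ω, (M.Sbar j r ω).toReal * φ ω ∂M.basketMeasure Q
      = ∫ ω, φ ω ∂(M.basketMeasure Q).withDensity (M.Sbar j r) :=
        (integral_withDensity_eq_integral_toReal_smul ((measurable_Sbar hr j).mono hm le_rfl)
          (ae_of_all _ fun ω => (Sbar_ne_top hr j ω).lt_top) φ).symm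
    _ = ∫ ω, φ ω ∂(M.Sbar0 j • Q j) := by
        rw [integral_trim hm hφ, trim_withDensity_Sbar_basketMeasure hQ hr, ← integral_trim hm hφ]
    _ = (M.Sbar0 j).toReal * ∫ ω, φ ω ∂Q j := integral_smul_measure _ _

theorem integrable_Sbar_mul_basketMeasure (hQ : NumeraireConsistent M Q) (hr : r ∈ Set.Icc 0 T)
    (j : Fin d) {φ : Ω → ℝ} (hφ : StronglyMeasurable[M.F r] φ) (hint : Integrable φ (Q j)) :
    Integrable (fun ω => (M.Sbar j r ω).toReal * φ ω) (M.basketMeasure Q) := by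
  have := hQ.1 j
  have := nonempty_of_isProbabilityMeasure (Q j)
  have hm := M.F.le r
  refine (integrable_withDensity_iff_integrable_smul' ((measurable_Sbar hr j).mono hm le_rfl)
    (ae_of_all _ fun ω => (Sbar_ne_top hr j ω).lt_top)).1 (integrable_of_integrable_trim hm ?_)
  rw [trim_withDensity_Sbar_basketMeasure hQ hr]
  exact (hint.smul_measure (Sbar0_ne_top j)).trim hm hφ

theorem setIntegral_Sbar_mul_basketMeasure (hQ : NumeraireConsistent M Q)
    (hr : r ∈ Set.Icc 0 T) (j : Fin d) {φ : Ω → ℝ} (hφ : StronglyMeasurable[M.F r] φ)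
    {s : Set Ω} (hs : MeasurableSet[M.F r] s) :
    ∫ ω in s, (M.Sbar j r ω).toReal * φ ω ∂M.basketMeasure Q =
      (M.Sbar0 j).toReal * ∫ ω in s, φ ω ∂Q j := by
  simp_rw [← integral_indicator (M.F.le r _ hs), Set.indicator_mul_right]
  exact integral_Sbar_mul_basketMeasure hQ hr j (hφ.indicator hs)

theorem isProbabilityMeasure_basketMeasure (hd : 0 < d) (hQ : NumeraireConsistent M Q) :
    IsProbabilityMeasure (M.basketMeasure Q) := by
  have := hQ.1
  have := nonempty_of_isProbabilityMeasure (Q ⟨0, hd⟩)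
  constructor
  rw [← lintegral_one, lintegral_basketMeasure_of_measurable hQ measurable_const]
  simp only [lintegral_one, measure_univ, mul_one]
  exact sum_Sbar0 hd

theorem integrable_toReal_Sbar {t : ℝ} (ht : t ∈ Set.Icc 0 T) (j : Fin d) (P : Measure Ω)
    [IsFiniteMeasure P] : Integrable (fun ω => (M.Sbar j t ω).toReal) P :=
  .of_bound ((measurable_Sbar ht j).mono (M.F.le t) le_rfl).ennreal_toReal.aestronglyMeasurable 1
    (ae_of_all _ fun ω => by
      simpa [abs_of_nonneg] using ENNReal.toReal_le_of_le_ofReal zero_le_one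
        (by simpa using Sbar_le_one ht j ω))

theorem isValuationMeasure_basketMeasure (hd : 0 < d) (hQ : NumeraireConsistent M Q) :
    IsValuationMeasure M (M.basketMeasure Q) := by
  have := isProbabilityMeasure_basketMeasure hd hQ
  refine ⟨this, fun j => ⟨fun t ht => ⟨(measurable_Sbar ht j).ennreal_toReal.stronglyMeasurable,
    integrable_toReal_Sbar ht j _⟩, fun r hr t ht hrt => ?_⟩⟩
  refine (ae_eq_condExp_of_forall_setIntegral_eq (M.F.le r) (integrable_toReal_Sbar ht j _)
    (fun s _ _ => (integrable_toReal_Sbar hr j _).integrableOn) (fun s hs _ => ?_)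
    (measurable_Sbar hr j).ennreal_toReal.aestronglyMeasurable).symm
  have hSbar : ∀ u ∈ Set.Icc 0 T, r ≤ u →
      ∫ ω in s, (M.Sbar j u ω).toReal ∂M.basketMeasure Q = (M.Sbar0 j).toReal * (Q j).real s :=
    fun u hu hru => by
      simpa using setIntegral_Sbar_mul_basketMeasure hQ hu j stronglyMeasurable_one
        (M.F.mono hru _ hs)
  rw [hSbar r hr le_rfl, hSbar t ht hrt]

theorem basketMeasure_absolutelyContinuous : M.basketMeasure Q ≪ ∑ i, Q i := by
  rw [basketMeasure, ← Measure.sum_fintype, ← Measure.sum_fintype]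
  exact Measure.absolutelyContinuous_sum_left fun j => Measure.absolutelyContinuous_sum_right j
    ((withDensity_absolutelyContinuous _ _).smul_left _)

theorem absolutelyContinuous_basketMeasure : ∑ i, Q i ≪ M.basketMeasure Q := by
  rw [basketMeasure, ← Measure.sum_fintype, ← Measure.sum_fintype]
  refine Measure.absolutelyContinuous_sum_left fun j => Measure.absolutelyContinuous_sum_right j ?_
  refine (withDensity_absolutelyContinuous' (measurable_basketDensity j).aemeasurable
    (ae_of_all _ fun ω => ?_)).trans (Measure.absolutelyContinuous_smul (Sbar0_ne_zero j))
  exact (ENNReal.div_pos_iff.2 ⟨ENNReal.inv_ne_zero.2 (Sbar_ne_top M.T_mem_Icc j ω),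
    ENNReal.natCast_ne_top _⟩).ne'

theorem setLIntegral_Cbar_basketMeasure (hQ : NumeraireConsistent M Q) (hC : M.IsClaim C)
    {s : Set Ω} (hs : MeasurableSet s) :
    ∫⁻ ω in s, M.Cbar C ω ∂M.basketMeasure Q =
      ∑ j, M.Sbar0 j * ∫⁻ ω in s, C ω j / (M.active T ω).card ∂Q j := by
  have hT := M.T_mem_Icc
  rw [← lintegral_indicator hs, lintegral_basketMeasure ((measurable_Cbar hC.1).indicator hs)]
  refine Finset.sum_congr rfl fun j _ => congrArg _ ?_
  rw [← lintegral_indicator hs]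
  refine lintegral_congr_ae ?_
  filter_upwards [hQ.ae_active hT j] with ω hj
  by_cases hω : ω ∈ s
  · rw [Set.indicator_of_mem hω, Set.indicator_of_mem hω, Cbar_eq_Sbar_mul (hC.2 ω) hj,
      basketDensity, div_eq_mul_inv, div_eq_mul_inv, mul_right_comm,
      ENNReal.inv_mul_cancel_left (Sbar_ne_zero hj) (Sbar_ne_top hT j ω)]
  · simp [hω]

theorem Sbar0_mul_setLIntegral_div_card_ne_top (hQ : NumeraireConsistent M Q)
    (hCint : ∀ i, ∫⁻ ω, C ω i ∂Q i < ∞) (j : Fin d) (s : Set Ω) :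
    M.Sbar0 j * ∫⁻ ω in s, C ω j / (M.active T ω).card ∂Q j ≠ ∞ := by
  have := hQ.1 j
  have := nonempty_of_isProbabilityMeasure (Q j)
  exact ENNReal.mul_ne_top (Sbar0_ne_top j) ((hQ.lintegral_div_card_le j).trans_lt (hCint j)).ne

theorem setLIntegral_Cbar_basketMeasure_lt_top (hQ : NumeraireConsistent M Q) (hC : M.IsClaim C)
    (hCint : ∀ i, ∫⁻ ω, C ω i ∂Q i < ∞) {s : Set Ω} (hs : MeasurableSet s) :
    ∫⁻ ω in s, M.Cbar C ω ∂M.basketMeasure Q < ∞ := by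
  rw [setLIntegral_Cbar_basketMeasure hQ hC hs]
  exact ENNReal.sum_lt_top.2 fun j _ =>
    (Sbar0_mul_setLIntegral_div_card_ne_top hQ hCint j s).lt_top

theorem IsClaim.measurable_div_card (hC : M.IsClaim C) (j : Fin d) :
    Measurable fun ω => C ω j / (M.active T ω).card :=
  (hC.1 j).div ((measurable_card_active M.T_mem_Icc).mono (M.F.le T) le_rfl)

theorem integrable_toReal_div_card (hQ : NumeraireConsistent M Q) (hC : M.IsClaim C)
    (hCint : ∀ i, ∫⁻ ω, C ω i ∂Q i < ∞) (j : Fin d) :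
    Integrable (fun ω => (C ω j / (M.active T ω).card).toReal) (Q j) :=
  integrable_toReal_of_lintegral_ne_top (hC.measurable_div_card j).aemeasurable
    (by simpa using ((hQ.lintegral_div_card_le j (s := Set.univ)).trans_lt (hCint j)).ne)

theorem setIntegral_Cbar_basketMeasure (hQ : NumeraireConsistent M Q) (hC : M.IsClaim C)
    (hCint : ∀ i, ∫⁻ ω, C ω i ∂Q i < ∞) {s : Set Ω} (hs : MeasurableSet s) :
    ∫ ω in s, (M.Cbar C ω).toReal ∂M.basketMeasure Q =
      ∑ j, (M.Sbar0 j).toReal * ∫ ω in s, (C ω j / (M.active T ω).card).toReal ∂Q j := by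
  rw [integral_toReal (measurable_Cbar hC.1).aemeasurable (ae_lt_top (measurable_Cbar hC.1)
      (setLIntegral_Cbar_basketMeasure_lt_top hQ hC hCint hs).ne),
    setLIntegral_Cbar_basketMeasure hQ hC hs,
    ENNReal.toReal_sum fun j _ => Sbar0_mul_setLIntegral_div_card_ne_top hQ hCint j s]
  refine Finset.sum_congr rfl fun j _ => ?_
  rw [ENNReal.toReal_mul, integral_toReal (hC.measurable_div_card j).aemeasurable
    (ae_lt_top (hC.measurable_div_card j) ((hQ.lintegral_div_card_le j).trans_lt (hCint j)).ne)]

theorem aggregationFormula_basketMeasure (hd : 0 < d) (hQ : NumeraireConsistent M Q) {r : ℝ}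
    (hr : r ∈ Set.Icc 0 T) (hC : M.IsClaim C) (hCint : ∀ i, ∫⁻ ω, C ω i ∂Q i < ∞) :
    AggregationFormula M (M.basketMeasure Q) Q C r := by
  have := isProbabilityMeasure_basketMeasure hd hQ
  have := hQ.1
  set g : Fin d → Ω → ℝ := fun j => (Q j)[fun ω => (C ω j / (M.active T ω).card).toReal|M.F r]
  have hg : ∀ j, StronglyMeasurable[M.F r] (g j) := fun j => stronglyMeasurable_condExp
  have hint : ∀ j, Integrable (fun ω => (M.Sbar j r ω).toReal * g j ω) (M.basketMeasure Q) :=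
    fun j => integrable_Sbar_mul_basketMeasure hQ hr j (hg j) integrable_condExp
  have hrhs : (fun ω => ∑ j, {ω | ∑ k, M.S r ω j k < ∞}.indicator
      (fun ω => (M.Sbar j r ω).toReal * g j ω) ω) = fun ω => ∑ j, (M.Sbar j r ω).toReal * g j ω :=
    funext fun ω => Finset.sum_congr rfl fun j _ =>
      congrFun (indicator_active_eq_self fun ω h => by simp [h]) ω
  have hCbar_int : Integrable (fun ω => (M.Cbar C ω).toReal) (M.basketMeasure Q) := by
    refine integrable_toReal_of_lintegral_ne_top (measurable_Cbar hC.1).aemeasurable ?_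
    simpa using (setLIntegral_Cbar_basketMeasure_lt_top hQ hC hCint MeasurableSet.univ).ne
  unfold AggregationFormula
  rw [hrhs]
  refine (ae_eq_condExp_of_forall_setIntegral_eq (M.F.le r) hCbar_int
    (fun s _ _ => (integrable_finsetSum _ fun j _ => hint j).integrableOn) (fun s hs _ => ?_)
    (Finset.measurable_sum _ fun j _ => (measurable_Sbar hr j).ennreal_toReal.mul
      (hg j).measurable).aestronglyMeasurable).symm
  rw [integral_finsetSum _ fun j _ => (hint j).integrableOn,
    setIntegral_Cbar_basketMeasure hQ hC hCint (M.F.le r _ hs)]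
  refine Finset.sum_congr rfl fun j _ => ?_
  rw [setIntegral_Sbar_mul_basketMeasure hQ hr j (hg j) hs,
    setIntegral_condExp (M.F.le r) (integrable_toReal_div_card hQ hC hCint j) hs]

theorem isValueVector_basketClaim (B : Set Ω) (ω : Ω) :
    IsValueVector (fun i j => M.S T ω i j) (M.basketClaim B ω) :=
  (M.exchange_S T M.T_mem_Icc ω).isValueVector_sum_row.const_mul
    (by by_cases hω : ω ∈ B <;> simp [hω])

theorem isClaim_basketClaim (hB : MeasurableSet B) : M.IsClaim (M.basketClaim B) :=
  ⟨fun j => (measurable_one.indicator hB).mul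
    ((measurable_sum_S M.T_mem_Icc j).mono (M.F.le T) le_rfl),
    isValueVector_basketClaim B⟩

theorem Cbar_basketClaim {ω : Ω} {j : Fin d} (hj : ∑ k, M.S T ω j k < ∞) :
    M.Cbar (M.basketClaim B) ω = B.indicator 1 ω := by
  rw [Cbar_eq_Sbar_mul (isValueVector_basketClaim B ω) hj, basketClaim, mul_left_comm, Sbar,
    ENNReal.inv_mul_cancel ((M.exchange_S T M.T_mem_Icc ω).sum_row_ne_zero j) hj.ne,
    mul_one]

theorem lintegral_basketClaim_lt_top (hQ : NumeraireConsistent M Q)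
    (B : Set Ω) (j : Fin d) : ∫⁻ ω, M.basketClaim B ω j ∂Q j < ∞ :=
  (lintegral_mono fun ω => mul_le_of_le_one_left' (by by_cases hω : ω ∈ B <;> simp [hω])).trans_lt
    (hQ.lintegral_sum_S_lt_top M.T_mem_Icc j)

theorem F_zero_eq_bot : M.F 0 = ⊥ :=
  le_bot_iff.1 fun A hA => MeasurableSpace.measurableSet_bot_iff.2 (M.trivial_F0 A hA)

theorem integral_Cbar_of_aggregationFormula_zero (hQ : NumeraireConsistent M Q)
    {P : Measure Ω} [IsProbabilityMeasure P] {C : Ω → Fin d → ℝ≥0∞}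
    (hform : AggregationFormula M P Q C 0) :
    ∫ ω, (M.Cbar C ω).toReal ∂P =
      ∑ j, (M.Sbar0 j).toReal * ∫ ω, (C ω j / (M.active T ω).card).toReal ∂Q j := by
  have := hQ.1
  unfold AggregationFormula at hform
  simp only [F_zero_eq_bot, condExp_bot] at hform
  obtain ⟨ω, hω⟩ := hform.exists
  refine hω.trans ?_
  refine Finset.sum_congr rfl fun j _ => ?_
  rw [Set.indicator_of_mem (show ω ∈ {ω | ∑ k, M.S 0 ω j k < ∞} from M.sum_S_zero_lt_top j ω),
    Sbar_zero]

/-- `C̄ = 1_B` almost surely, as some currency is always active. -/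
theorem toReal_measure_eq_of_aggregationFormula_zero (hQ : NumeraireConsistent M Q)
    {P : Measure Ω} [IsProbabilityMeasure P] (hP : P ≪ ∑ i, Q i) (hB : MeasurableSet B)
    (hform : AggregationFormula M P Q (M.basketClaim B) 0) :
    (P B).toReal = ∑ j, (M.Sbar0 j).toReal *
      ∫ ω, (M.basketClaim B ω j / (M.active T ω).card).toReal ∂Q j := by
  rw [← integral_Cbar_of_aggregationFormula_zero hQ hform, ← measureReal_def,
    ← integral_indicator_one hB]
  refine integral_congr_ae
    (Filter.Eventually.mono (hP.ae_le hQ.ae_exists_active) fun ω ⟨j, hj⟩ => ?_)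
  by_cases hω : ω ∈ B <;> simp [Cbar_basketClaim hj, hω]

theorem eq_of_aggregationFormula_zero (hQ : NumeraireConsistent M Q) {P₁ P₂ : Measure Ω}
    [IsProbabilityMeasure P₁] [IsProbabilityMeasure P₂] (h₁ : P₁ ≪ ∑ i, Q i)
    (h₂ : P₂ ≪ ∑ i, Q i)
    (hform₁ : ∀ C, M.IsClaim C → (∀ i, ∫⁻ ω, C ω i ∂Q i < ∞) → AggregationFormula M P₁ Q C 0)
    (hform₂ : ∀ C, M.IsClaim C → (∀ i, ∫⁻ ω, C ω i ∂Q i < ∞) → AggregationFormula M P₂ Q C 0) :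
    P₁ = P₂ := by
  refine Measure.ext fun B hB => (ENNReal.toReal_eq_toReal_iff' (measure_ne_top _ _)
    (measure_ne_top _ _)).1 ?_
  have hC := isClaim_basketClaim (M := M) hB
  rw [toReal_measure_eq_of_aggregationFormula_zero hQ h₁ hB
      (hform₁ _ hC (lintegral_basketClaim_lt_top hQ B)),
    toReal_measure_eq_of_aggregationFormula_zero hQ h₂ hB
      (hform₂ _ hC (lintegral_basketClaim_lt_top hQ B))]

end MarketModel

/-- Theorem, aggregation: given a numéraire-consistent family `(Q_i)`, there
is a unique valuation measure `Q̄` with respect to the basket, equivalent to `∑ i, Q i`,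
satisfying the aggregation valuation formula for all `r ∈ [0, T]` and all claims `C` with
`C_i ∈ L¹(Q_i)` for all `i`. -/
theorem aggregation_exists_unique {d : ℕ} {Ω : Type*} [MeasurableSpace Ω] {T : ℝ}
    (hd : 0 < d) (M : MarketModel d Ω T) (Q : Fin d → Measure Ω)
    (hQ : NumeraireConsistent M Q) :
    ∃! Qb : Measure Ω,
      IsValuationMeasure M Qb ∧
      (Qb ≪ (∑ i, Q i) ∧ (∑ i, Q i) ≪ Qb) ∧
      ∀ r ∈ Set.Icc (0 : ℝ) T, ∀ C : Ω → Fin d → ℝ≥0∞, M.IsClaim C →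
        (∀ i, ∫⁻ ω, C ω i ∂(Q i) < ∞) → AggregationFormula M Qb Q C r := by
  have hformula : ∀ r ∈ Set.Icc (0 : ℝ) T, ∀ C : Ω → Fin d → ℝ≥0∞, M.IsClaim C →
      (∀ i, ∫⁻ ω, C ω i ∂(Q i) < ∞) → AggregationFormula M (M.basketMeasure Q) Q C r :=
    fun r hr C hC hCint => MarketModel.aggregationFormula_basketMeasure hd hQ hr hC hCint
  refine ⟨M.basketMeasure Q, ⟨MarketModel.isValuationMeasure_basketMeasure hd hQ,
    ⟨MarketModel.basketMeasure_absolutelyContinuous,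
      MarketModel.absolutelyContinuous_basketMeasure⟩, hformula⟩, ?_⟩
  rintro P ⟨⟨hP, -⟩, ⟨hPQ, -⟩, hPformula⟩
  have := MarketModel.isProbabilityMeasure_basketMeasure hd hQ
  exact MarketModel.eq_of_aggregationFormula_zero hQ hPQ
    MarketModel.basketMeasure_absolutelyContinuous (fun C => hPformula 0 M.zero_mem_Icc C)
    (fun C => hformula 0 M.zero_mem_Icc C)
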